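/- arXiv:2301.06623 — 2 statements merged into one kernel-verified Lean document; each statement's English description precedes it below -/
import Mathlib

section
/- For every d ≥ 4, the d-demicube ω̄^d is 2-stiff; that is, ω̄^d is a spherical 3-design on S^{d-1} and there exists a point z ∈ S^{d-1} forming at most 2 distinct dot products with the points of ω̄^d. -/
open MeasureTheory Metric
open scoped RealInnerProductSpace

noncomputable section

/-- `E n` is the Euclidean space `ℝ^n`; the unit sphere `S^{n-1}` is `Metric.sphere (0 : E n) 1`. -/
abbrev E (n : ℕ) : Type := EuclideanSpace ℝ (Fin n)

/-- The surface area measure on the unit sphere of `ℝ^n`, normalized to be a probability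
measure. -/
noncomputable def sphereUnif (n : ℕ) : Measure (sphere (0 : E n) 1) :=
  (((volume : Measure (E n)).toSphere) Set.univ)⁻¹ • (volume : Measure (E n)).toSphere

/-- `X` is a spherical `k`-design on the unit sphere of `ℝ^n`: all its points lie on the sphere
and every polynomial of total degree at most `k` has average over `X` equal to its average over
the sphere (with respect to the normalized surface area measure). -/
def IsSphericalDesign (n k : ℕ) (X : Finset (E n)) : Prop :=
  (↑X : Set (E n)) ⊆ sphere (0 : E n) 1 ∧
    ∀ p : MvPolynomial (Fin n) ℝ, p.totalDegree ≤ k →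
      (∑ x ∈ X, MvPolynomial.eval (fun i => x i) p) / (X.card : ℝ) =
        ∫ y, MvPolynomial.eval (fun i => (y : E n) i) p ∂(sphereUnif n)

/-- `Dm n m X` is the set of points `z` of the unit sphere of `ℝ^n` forming at most `m`
distinct dot products with the points of `X`. -/
def Dm (n m : ℕ) (X : Set (E n)) : Set (E n) :=
  {z | z ∈ sphere (0 : E n) 1 ∧ ∃ T : Finset ℝ, T.card ≤ m ∧ ∀ x ∈ X, ⟪z, x⟫ ∈ T}

/-- `X` is an `m`-stiff configuration on the unit sphere of `ℝ^n`: it is a spherical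
`(2m-1)`-design and some point of the sphere forms at most `m` distinct dot products with the
points of `X`. -/
def IsStiff (n m : ℕ) (X : Finset (E n)) : Prop :=
  IsSphericalDesign n (2 * m - 1) X ∧ (Dm n m ↑X).Nonempty

/-- The `d`-demicube: the `2^(d-1)` points `(±1/√d, …, ±1/√d)` of `S^{d-1} ⊂ ℝ^d` having an
even number of minus signs. -/
noncomputable def demicube (d : ℕ) : Finset (E d) :=
  letI : DecidableEq (E d) := Classical.decEq _
  ((Finset.univ : Finset (Fin d → Bool)).filter fun ε =>
      Even (Finset.univ.filter fun i => ε i = true).card).image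
    (fun ε => (WithLp.toLp 2 (fun i => if ε i then -(1 / Real.sqrt d) else 1 / Real.sqrt d) : E d))

/-! The demicube and the normalized sphere measure are both invariant under flipping the signs of
two coordinates, and the sphere measure also under a single sign flip or a transposition of
coordinates. A monomial of degree at most `3` with an odd exponent also has a zero exponent, since
`d ≥ 4`; flipping the signs of these two coordinates negates the monomial, so its averages over the
demicube and over the sphere both vanish. The remaining monomials are `1` and `x i ^ 2`: every
point of the demicube has `x i ^ 2 = 1 / d`, and on the sphere the `d` equal integrals of
`y i ^ 2` add up to `1`. Finally a coordinate vector forms only the inner products `±1 / √d` with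
the demicube. -/

open Finset
open scoped Pointwise

lemma LinearEquiv.smul_preimage {R M N : Type*} [Semiring R] [AddCommMonoid M] [AddCommMonoid N]
    [Module R M] [Module R N] (e : M ≃ₗ[R] N) (S : Set R) (A : Set N) :
    S • (e ⁻¹' A) = e ⁻¹' (S • A) := by
  ext x
  simp only [Set.mem_smul, Set.mem_preimage]
  constructor
  · rintro ⟨r, hr, a, ha, rfl⟩
    exact ⟨r, hr, e a, ha, (e.map_smul r a).symm⟩
  · rintro ⟨r, hr, a, ha, hax⟩
    exact ⟨r, hr, e.symm a, by simpa using ha, e.injective (by simpa using hax)⟩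

section SphereSymmetry

variable {F : Type*} [NormedAddCommGroup F] [NormedSpace ℝ F]

def LinearIsometryEquiv.sphereHomeomorph (e : F ≃ₗᵢ[ℝ] F) :
    sphere (0 : F) 1 ≃ₜ sphere (0 : F) 1 :=
  e.toHomeomorph.subtype fun x => by simp

@[simp]
lemma LinearIsometryEquiv.coe_sphereHomeomorph (e : F ≃ₗᵢ[ℝ] F) (y : sphere (0 : F) 1) :
    (e.sphereHomeomorph y : F) = e y := rfl

lemma LinearIsometryEquiv.image_coe_preimage_sphereHomeomorph (e : F ≃ₗᵢ[ℝ] F)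
    (s : Set (sphere (0 : F) 1)) :
    Subtype.val '' (e.sphereHomeomorph ⁻¹' s) = e ⁻¹' (Subtype.val '' s) := by
  ext x
  constructor
  · rintro ⟨y, hy, rfl⟩
    exact ⟨_, hy, rfl⟩
  · rintro ⟨y, hy, hxy⟩
    have hx : x ∈ sphere (0 : F) 1 := by simpa [hxy] using y.2
    have hy' : e.sphereHomeomorph ⟨x, hx⟩ = y := Subtype.ext hxy.symm
    exact ⟨⟨x, hx⟩, by rwa [Set.mem_preimage, hy'], rfl⟩

/-- `μ.toSphere s` only sees the cone `(0, 1) • s`, which a linear isometry preserves. -/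
lemma LinearIsometryEquiv.measurePreserving_sphereHomeomorph [MeasurableSpace F] [BorelSpace F]
    {μ : Measure F} (e : F ≃ₗᵢ[ℝ] F) (he : MeasurePreserving e μ μ) :
    MeasurePreserving e.sphereHomeomorph μ.toSphere μ.toSphere := by
  have hmeas := e.sphereHomeomorph.continuous.measurable
  have he' : MeasurePreserving e.toHomeomorph.toMeasurableEquiv μ μ := he
  refine ⟨hmeas, Measure.ext fun s hs => ?_⟩
  rw [Measure.map_apply hmeas hs, Measure.toSphere_apply' _ (hs.preimage hmeas),
    Measure.toSphere_apply' _ hs, e.image_coe_preimage_sphereHomeomorph,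
    show ⇑e = ⇑e.toLinearEquiv from rfl, e.toLinearEquiv.smul_preimage]
  exact congrArg _ (he'.measure_preimage_equiv _)

end SphereSymmetry

section SignFlip

variable {n : ℕ}

def signFlip (s : Finset (Fin n)) : E n ≃ₗᵢ[ℝ] E n :=
  LinearIsometryEquiv.piLpCongrRight 2 fun i =>
    if i ∈ s then LinearIsometryEquiv.neg ℝ else LinearIsometryEquiv.refl ℝ ℝ

lemma signFlip_apply (s : Finset (Fin n)) (x : E n) (i : Fin n) :
    signFlip s x i = if i ∈ s then -x i else x i := by
  unfold signFlip
  split_ifs <;> simp [*]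

lemma signFlip_signFlip (s : Finset (Fin n)) (x : E n) : signFlip s (signFlip s x) = x := by
  ext i
  simp only [signFlip_apply]
  split_ifs <;> simp

lemma prod_pow_signFlip (s : Finset (Fin n)) (v : Fin n → ℕ) (x : E n) :
    ∏ i, signFlip s x i ^ v i = (-1) ^ (∑ i ∈ s, v i) * ∏ i, x i ^ v i := by
  have hflip : ∀ i, signFlip s x i ^ v i = (if i ∈ s then (-1) ^ v i else 1) * x i ^ v i := by
    intro i
    rw [signFlip_apply]
    split_ifs
    exacts [neg_pow _ _, (one_mul _).symm]
  simp only [hflip, prod_mul_distrib, prod_ite_mem, univ_inter, prod_pow_eq_pow_sum]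

end SignFlip

section SphereMoments

variable {n : ℕ}

instance : IsFiniteMeasure (sphereUnif n) :=
  ⟨(ENNReal.inv_mul_le_one _).trans_lt ENNReal.one_lt_top⟩

instance [NeZero n] : IsProbabilityMeasure (sphereUnif n) := by
  refine ⟨ENNReal.inv_mul_cancel ?_ (measure_ne_top _ _)⟩
  exact Measure.measure_univ_ne_zero.2 (volume : Measure (E n)).toSphere_ne_zero

lemma integral_sphereUnif_comp (e : E n ≃ₗᵢ[ℝ] E n) (f : sphere (0 : E n) 1 → ℝ) :
    ∫ y, f (e.sphereHomeomorph y) ∂sphereUnif n = ∫ y, f y ∂sphereUnif n :=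
  ((e.measurePreserving_sphereHomeomorph e.measurePreserving).smul_measure _).integral_comp'
    (f := e.sphereHomeomorph.toMeasurableEquiv) f

lemma integrable_sphereUnif_of_continuous {f : sphere (0 : E n) 1 → ℝ} (hf : Continuous f) :
    Integrable f (sphereUnif n) :=
  hf.integrable_of_hasCompactSupport (HasCompactSupport.of_compactSpace f)

lemma integral_sphereUnif_monomial_eq_zero (v : Fin n → ℕ) {i : Fin n} (hi : Odd (v i)) :
    ∫ y, ∏ j, (y : E n) j ^ v j ∂sphereUnif n = 0 := by
  have hflip := integral_sphereUnif_comp (signFlip {i}) fun y => ∏ j, (y : E n) j ^ v j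
  simp only [LinearIsometryEquiv.coe_sphereHomeomorph, prod_pow_signFlip, sum_singleton,
    hi.neg_one_pow, neg_one_mul, integral_neg] at hflip
  linarith

lemma integral_sphereUnif_sq_eq (i j : Fin n) :
    ∫ y, (y : E n) i ^ 2 ∂sphereUnif n = ∫ y, (y : E n) j ^ 2 ∂sphereUnif n := by
  simpa using (integral_sphereUnif_comp (.piLpCongrLeft 2 ℝ ℝ (Equiv.swap i j))
    fun y => (y : E n) i ^ 2).symm

lemma integral_sphereUnif_sq [NeZero n] (i : Fin n) :
    ∫ y, (y : E n) i ^ 2 ∂sphereUnif n = 1 / n := by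
  have hsum : ∑ j, ∫ y, (y : E n) j ^ 2 ∂sphereUnif n = 1 := by
    rw [← integral_finsetSum _ fun j _ => integrable_sphereUnif_of_continuous (by fun_prop)]
    have hnorm : ∀ y : sphere (0 : E n) 1, ∑ j, (y : E n) j ^ 2 = 1 := fun y => by
      rw [← EuclideanSpace.real_norm_sq_eq, norm_eq_of_mem_sphere, one_pow]
    simp [hnorm]
  rw [sum_congr rfl fun j _ => integral_sphereUnif_sq_eq j i, sum_const, card_univ,
    Fintype.card_fin, nsmul_eq_mul] at hsum
  rw [eq_div_iff (Nat.cast_ne_zero.2 (NeZero.ne n)), mul_comm, hsum]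

end SphereMoments

lemma isSphericalDesign_of_forall_monomial {n k : ℕ} {X : Finset (E n)} (hX : ↑X ⊆ sphere (0 : E n) 1)
    (hmono : ∀ v : Fin n → ℕ, ∑ i, v i ≤ k →
      (∑ x ∈ X, ∏ i, x i ^ v i) / #X = ∫ y, ∏ i, (y : E n) i ^ v i ∂sphereUnif n) :
    IsSphericalDesign n k X := by
  refine ⟨hX, fun p hp => ?_⟩
  have hdeg : ∀ v ∈ p.support, ∑ i, v i ≤ k := fun v hv => by
    simpa [Finsupp.sum_fintype] using (MvPolynomial.le_totalDegree hv).trans hp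
  simp only [MvPolynomial.eval_eq']
  rw [integral_finsetSum _ fun v _ =>
      (integrable_sphereUnif_of_continuous (by fun_prop)).const_mul _,
    sum_comm, sum_div]
  refine sum_congr rfl fun v hv => ?_
  rw [← mul_sum, mul_div_assoc, hmono v (hdeg v hv), integral_const_mul]

section Exponents

variable {ι : Type*} [Fintype ι]

lemma card_filter_xor_add (ε η : ι → Bool) :
    #{i | xor (ε i) (η i) = true} + 2 * #{i | (ε i && η i) = true} =
      #{i | ε i = true} + #{i | η i = true} := by
  simp only [card_filter, mul_sum, ← sum_add_distrib]
  exact sum_congr rfl fun i _ => by cases ε i <;> cases η i <;> rfl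

lemma exists_eq_zero_of_sum_lt_card (v : ι → ℕ) (hv : ∑ i, v i < Fintype.card ι) :
    ∃ i, v i = 0 := by
  by_contra! hpos
  have := card_nsmul_le_sum univ v 1 fun i _ => Nat.one_le_iff_ne_zero.2 (hpos i)
  exact hv.not_ge (by simpa using this)

variable [DecidableEq ι]

lemma eq_zero_or_eq_single_two (v : ι → ℕ) (hv : ∑ i, v i ≤ 3) (heven : ∀ i, Even (v i)) :
    v = 0 ∨ ∃ i, v = Pi.single i 2 := by
  refine or_iff_not_imp_left.2 fun hne => ?_
  obtain ⟨i, hi⟩ := Function.ne_iff.1 hne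
  have hle : ∀ j, v j ≤ 3 := fun j =>
    (single_le_sum (fun _ _ => Nat.zero_le _) (mem_univ j)).trans hv
  refine ⟨i, funext fun j => ?_⟩
  obtain ⟨a, ha⟩ := heven i
  obtain ⟨b, hb⟩ := heven j
  rcases eq_or_ne j i with rfl | hji
  · simp only [Pi.single_eq_same, Pi.zero_apply] at hi ⊢
    have := hle j
    omega
  · have hpair : v j + v i ≤ 3 := (sum_pair hji).symm.le.trans
      ((sum_le_sum_of_subset (subset_univ _)).trans hv)
    simp only [Pi.single_eq_of_ne hji, Pi.zero_apply] at hi ⊢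
    omega

lemma prod_pow_single_two (x : ι → ℝ) (i : ι) :
    ∏ j, x j ^ (Pi.single i 2 : ι → ℕ) j = x i ^ 2 := by
  rw [prod_eq_single i (fun j _ hji => by simp [Pi.single_eq_of_ne hji]) (by simp)]
  simp

end Exponents

section Demicube

variable {d : ℕ}

def demicubePoint (d : ℕ) (ε : Fin d → Bool) : E d :=
  WithLp.toLp 2 fun i => if ε i then -(1 / Real.sqrt d) else 1 / Real.sqrt d

lemma mem_demicube {x : E d} :
    x ∈ demicube d ↔ ∃ ε : Fin d → Bool, Even #{i | ε i = true} ∧ demicubePoint d ε = x := by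
  simp [demicube, demicubePoint]

lemma demicube_nonempty : (demicube d).Nonempty :=
  ⟨demicubePoint d fun _ => false, mem_demicube.2 ⟨_, by simp, rfl⟩⟩

lemma demicubePoint_apply_sq (ε : Fin d → Bool) (i : Fin d) :
    demicubePoint d ε i ^ 2 = 1 / d := by
  simp only [demicubePoint, PiLp.toLp_apply]
  split_ifs <;> simp

lemma demicube_subset_sphere [NeZero d] : (↑(demicube d) : Set (E d)) ⊆ sphere 0 1 := by
  intro x hx
  obtain ⟨ε, -, rfl⟩ := mem_demicube.1 hx
  rw [mem_sphere_zero_iff_norm, ← pow_eq_one_iff_of_nonneg (norm_nonneg _) two_ne_zero,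
    EuclideanSpace.real_norm_sq_eq]
  simp [demicubePoint_apply_sq, NeZero.ne]

lemma signFlip_demicubePoint (s : Finset (Fin d)) (ε : Fin d → Bool) :
    signFlip s (demicubePoint d ε) = demicubePoint d fun i => xor (ε i) (decide (i ∈ s)) := by
  ext i
  rw [signFlip_apply]
  simp only [demicubePoint, PiLp.toLp_apply]
  cases ε i <;> by_cases hi : i ∈ s <;> simp [hi]

lemma signFlip_mem_demicube {s : Finset (Fin d)} (hs : Even #s) {x : E d}
    (hx : x ∈ demicube d) : signFlip s x ∈ demicube d := by
  obtain ⟨ε, hε, rfl⟩ := mem_demicube.1 hx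
  refine mem_demicube.2 ⟨_, ?_, (signFlip_demicubePoint s ε).symm⟩
  have hcard := card_filter_xor_add ε fun i => decide (i ∈ s)
  simp only [decide_eq_true_eq, filter_mem_eq_inter, univ_inter] at hcard
  have heven : Even (#{i | xor (ε i) (decide (i ∈ s)) = true} + 2 * _) := hcard ▸ hε.add hs
  exact (Nat.even_add.1 heven).2 (even_two_mul _)

lemma sum_demicube_comp_signFlip {s : Finset (Fin d)} (hs : Even #s) (f : E d → ℝ) :
    ∑ x ∈ demicube d, f (signFlip s x) = ∑ x ∈ demicube d, f x :=
  sum_nbij' (signFlip s) (signFlip s) (fun _ hx => signFlip_mem_demicube hs hx)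
    (fun _ hx => signFlip_mem_demicube hs hx) (fun x _ => signFlip_signFlip s x)
    (fun x _ => signFlip_signFlip s x) fun _ _ => rfl

lemma sum_demicube_monomial_eq_zero (v : Fin d → ℕ) {i k : Fin d} (hik : i ≠ k)
    (hi : Odd (v i)) (hk : Even (v k)) : ∑ x ∈ demicube d, ∏ j, x j ^ v j = 0 := by
  have hflip := sum_demicube_comp_signFlip (s := {i, k}) (by simp [hik]) fun x => ∏ j, x j ^ v j
  simp only [prod_pow_signFlip, sum_pair hik, (hi.add_even hk).neg_one_pow, neg_one_mul,
    sum_neg_distrib] at hflip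
  linarith

lemma average_demicube_monomial_eq_integral (hd : 4 ≤ d) (v : Fin d → ℕ) (hv : ∑ i, v i ≤ 3) :
    (∑ x ∈ demicube d, ∏ i, x i ^ v i) / #(demicube d) =
      ∫ y, ∏ i, (y : E d) i ^ v i ∂sphereUnif d := by
  have : NeZero d := ⟨by omega⟩
  by_cases hodd : ∃ i, Odd (v i)
  · obtain ⟨i, hi⟩ := hodd
    obtain ⟨k, hk⟩ := exists_eq_zero_of_sum_lt_card v (by simp only [Fintype.card_fin]; omega)
    have hik : i ≠ k := by
      rintro rfl
      simp [hk] at hi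
    rw [sum_demicube_monomial_eq_zero v hik hi (by simp [hk]), zero_div,
      integral_sphereUnif_monomial_eq_zero v hi]
  · have heven : ∀ i, Even (v i) := fun i => Nat.not_odd_iff_even.1 fun h => hodd ⟨i, h⟩
    have hcard : (#(demicube d) : ℝ) ≠ 0 := Nat.cast_ne_zero.2 demicube_nonempty.card_pos.ne'
    rcases eq_zero_or_eq_single_two v hv heven with rfl | ⟨i, rfl⟩
    · simp [hcard]
    · have hsq : ∀ x ∈ demicube d, x i ^ 2 = 1 / d := fun x hx => by
        obtain ⟨ε, -, rfl⟩ := mem_demicube.1 hx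
        exact demicubePoint_apply_sq ε i
      simp only [prod_pow_single_two]
      rw [sum_congr rfl hsq, sum_const, nsmul_eq_mul, mul_div_cancel_left₀ _ hcard,
        integral_sphereUnif_sq]

lemma single_mem_Dm_demicube (i : Fin d) :
    EuclideanSpace.single i 1 ∈ Dm d 2 ↑(demicube d) := by
  refine ⟨by simp, {1 / Real.sqrt d, -(1 / Real.sqrt d)}, card_le_two, fun x hx => ?_⟩
  obtain ⟨ε, -, rfl⟩ := mem_demicube.1 hx
  simp only [EuclideanSpace.inner_single_left, demicubePoint]
  cases ε i <;> simp

end Demicube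

/-- Lemma 3.3: the `d`-demicube, `d ≥ 4`, is a `2`-stiff configuration on `S^{d-1}`. -/
theorem demicube_isStiff_two (d : ℕ) (hd : 4 ≤ d) : IsStiff d 2 (demicube d) := by
  have : NeZero d := ⟨by omega⟩
  exact ⟨isSphericalDesign_of_forall_monomial demicube_subset_sphere fun v hv =>
      average_demicube_monomial_eq_integral hd v hv,
    ⟨_, single_mem_Dm_demicube ⟨0, by omega⟩⟩⟩
end
end

section
/- For any finite configuration ω_N ⊂ S^d, d ≥ 1, with D_m(ω_N) ≠ ∅ (m ≥ 1), the set D_m(ω_N) is antipodal (i.e., z ∈ D_m(ω_N) implies -z ∈ D_m(ω_N)). Moreover, if ω_N is m-stiff, then ω_N ⊂ D_m(D_m(ω_N)). -/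
open MeasureTheory Metric
open scoped RealInnerProductSpace

noncomputable section

/-!
Negating `z` negates all inner products, so `D_m` is antipodal. For the double dual, fix
`w ∈ D_m(ω_N)` and let `A`, `B` be the sets of inner products of `z ∈ D_m(ω_N)` and of `w` with
the points of `ω_N`. If some `t ∈ A` were not in `B`, then
`q(s) = ∏_{b ∈ B} (s - b) ∏_{a ∈ A \ {t}} (s - a)` has degree at most `2m - 1`; since the sphere
average of `y ↦ q(⟪z, y⟫)` does not depend on the unit vector `z` (rotation invariance), the
design property makes `∑ q(⟪z, x_i⟫)` and `∑ q(⟪w, x_i⟫)` equal. The second sum vanishes, the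
first is a positive multiple of `q(t) ≠ 0`. So `A ⊆ B` for every `z`, and `B` witnesses
`x_i ∈ D_m(D_m(ω_N))`.
-/

open scoped Pointwise

section Sphere

variable {F : Type*} [NormedAddCommGroup F] [NormedSpace ℝ F]

def LinearIsometryEquiv.restrictSphere (g : F ≃ₗᵢ[ℝ] F) :
    sphere (0 : F) 1 ≃ₜ sphere (0 : F) 1 :=
  g.toHomeomorph.subtype fun x => by simp

@[simp]
lemma LinearIsometryEquiv.coe_restrictSphere (g : F ≃ₗᵢ[ℝ] F) (y : sphere (0 : F) 1) :
    (g.restrictSphere y : F) = g y := rfl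

lemma LinearIsometryEquiv.image_coe_preimage_restrictSphere (g : F ≃ₗᵢ[ℝ] F)
    (s : Set (sphere (0 : F) 1)) :
    ((↑) '' (g.restrictSphere ⁻¹' s) : Set F) = g ⁻¹' ((↑) '' s) := by
  ext y
  constructor
  · rintro ⟨u, hu, rfl⟩
    exact ⟨_, hu, rfl⟩
  · rintro ⟨v, hv, hvy⟩
    have hy : y ∈ sphere (0 : F) 1 := by simpa [hvy] using v.2
    have hv' : g.restrictSphere ⟨y, hy⟩ = v := Subtype.ext hvy.symm
    exact ⟨⟨y, hy⟩, show _ ∈ s from hv' ▸ hv, rfl⟩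

lemma LinearIsometryEquiv.smul_preimage (g : F ≃ₗᵢ[ℝ] F) (S : Set ℝ) (A : Set F) :
    S • (g ⁻¹' A) = g ⁻¹' (S • A) := by
  ext x
  simp only [Set.mem_smul, Set.mem_preimage]
  constructor
  · rintro ⟨r, hr, y, hy, rfl⟩
    exact ⟨r, hr, g y, hy, by simp⟩
  · rintro ⟨r, hr, a, ha, hx⟩
    exact ⟨r, hr, g.symm a, by simpa using ha, g.injective (by simp [hx])⟩

variable [MeasurableSpace F] [BorelSpace F]

lemma MeasureTheory.MeasurePreserving.toSphere_restrictSphere {μ : Measure F}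
    {g : F ≃ₗᵢ[ℝ] F} (hg : MeasurePreserving g μ μ) :
    MeasurePreserving g.restrictSphere μ.toSphere μ.toSphere := by
  refine ⟨g.restrictSphere.measurable, Measure.ext fun s hs => ?_⟩
  have hs' := g.restrictSphere.measurable hs
  rw [Measure.map_apply g.restrictSphere.measurable hs, Measure.toSphere_apply' _ hs',
    Measure.toSphere_apply' _ hs, g.image_coe_preimage_restrictSphere, g.smul_preimage,
    hg.measure_preimage_emb g.toHomeomorph.measurableEmbedding]

end Sphere

section Zonal

variable {n : ℕ}

lemma measurePreserving_restrictSphere_sphereUnif (g : E n ≃ₗᵢ[ℝ] E n) :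
    MeasurePreserving g.restrictSphere (sphereUnif n) (sphereUnif n) := by
  have hg := g.measurePreserving.toSphere_restrictSphere
  refine ⟨hg.measurable, ?_⟩
  rw [sphereUnif, Measure.map_smul, hg.map_eq]

lemma integral_comp_inner_sphereUnif (f : ℝ → ℝ) {z w : E n}
    (hz : z ∈ sphere (0 : E n) 1) (hw : w ∈ sphere (0 : E n) 1) :
    ∫ y, f ⟪z, (y : E n)⟫ ∂sphereUnif n = ∫ y, f ⟪w, (y : E n)⟫ ∂sphereUnif n := by
  rw [mem_sphere_zero_iff_norm] at hz hw
  let g : E n ≃ₗᵢ[ℝ] E n := (ℝ ∙ (w - z))ᗮ.reflection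
  have hgw : g w = z := Submodule.reflection_sub (hw.trans hz.symm)
  calc ∫ y, f ⟪z, (y : E n)⟫ ∂sphereUnif n
      = ∫ y, f ⟪z, (g.restrictSphere y : E n)⟫ ∂sphereUnif n :=
        ((measurePreserving_restrictSphere_sphereUnif g).integral_comp
          g.restrictSphere.measurableEmbedding (fun y => f ⟪z, (y : E n)⟫)).symm
    _ = ∫ y, f ⟪w, (y : E n)⟫ ∂sphereUnif n := by
        simp only [LinearIsometryEquiv.coe_restrictSphere, ← hgw, g.inner_map_map]

end Zonal

lemma MvPolynomial.totalDegree_aeval_le {σ R : Type*} [CommSemiring R] (p : MvPolynomial σ R)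
    (q : Polynomial R) : (Polynomial.aeval p q).totalDegree ≤ q.natDegree * p.totalDegree := by
  rw [Polynomial.aeval_eq_sum_range]
  refine totalDegree_finsetSum_le fun i hi => (totalDegree_smul_le _ _).trans ?_
  exact (totalDegree_pow p i).trans
    (Nat.mul_le_mul_right _ (Nat.lt_succ_iff.1 (Finset.mem_range.1 hi)))

section InnerPoly

variable {n : ℕ}

def innerPoly (z : E n) : MvPolynomial (Fin n) ℝ :=
  ∑ i, MvPolynomial.C (z i) * MvPolynomial.X i

lemma eval_innerPoly (z x : E n) : MvPolynomial.eval (fun i => x i) (innerPoly z) = ⟪z, x⟫ := by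
  simp [innerPoly, PiLp.inner_apply, mul_comm]

lemma totalDegree_innerPoly_le (z : E n) : (innerPoly z).totalDegree ≤ 1 :=
  MvPolynomial.totalDegree_finsetSum_le fun i _ => (MvPolynomial.totalDegree_mul _ _).trans
    (by simp [MvPolynomial.totalDegree_X])

lemma eval_aeval_innerPoly (q : Polynomial ℝ) (z x : E n) :
    MvPolynomial.eval (fun i => x i) (Polynomial.aeval (innerPoly z) q) = q.eval ⟪z, x⟫ := by
  have h := Polynomial.aeval_algHom_apply (MvPolynomial.aeval fun i => x i) (innerPoly z) q
  rw [MvPolynomial.aeval_eq_eval, eval_innerPoly, Polynomial.coe_aeval_eq_eval] at h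
  exact h.symm

lemma totalDegree_aeval_innerPoly_le (q : Polynomial ℝ) (z : E n) :
    (Polynomial.aeval (innerPoly z) q).totalDegree ≤ q.natDegree :=
  (MvPolynomial.totalDegree_aeval_le _ q).trans
    (by simpa using Nat.mul_le_mul_left q.natDegree (totalDegree_innerPoly_le z))

end InnerPoly

section Design

variable {n k : ℕ} {X : Finset (E n)}

lemma IsSphericalDesign.sum_eval_inner_eq (hX : IsSphericalDesign n k X) {q : Polynomial ℝ}
    (hq : q.natDegree ≤ k) {z w : E n} (hz : z ∈ sphere (0 : E n) 1)
    (hw : w ∈ sphere (0 : E n) 1) :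
    ∑ x ∈ X, q.eval ⟪z, x⟫ = ∑ x ∈ X, q.eval ⟪w, x⟫ := by
  have hmoment (u : E n) : (∑ x ∈ X, q.eval ⟪u, x⟫) / (X.card : ℝ) =
      ∫ y, q.eval ⟪u, (y : E n)⟫ ∂sphereUnif n := by
    simpa only [eval_aeval_innerPoly] using
      hX.2 _ ((totalDegree_aeval_innerPoly_le q u).trans hq)
  rcases X.eq_empty_or_nonempty with rfl | hne
  · simp
  · have hcard : (X.card : ℝ) ≠ 0 := Nat.cast_ne_zero.2 hne.card_pos.ne'
    rw [← div_left_inj' hcard, hmoment, hmoment]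
    exact integral_comp_inner_sphereUnif (q.eval ·) hz hw

lemma IsSphericalDesign.image_inner_subset (hX : IsSphericalDesign n k X) {z w : E n}
    (hz : z ∈ sphere (0 : E n) 1) (hw : w ∈ sphere (0 : E n) 1)
    (hcard : (X.image (⟪z, ·⟫)).card + (X.image (⟪w, ·⟫)).card ≤ k + 1) :
    X.image (⟪z, ·⟫) ⊆ X.image (⟪w, ·⟫) := by
  set A := X.image (⟪z, ·⟫)
  set B := X.image (⟪w, ·⟫)
  intro t ht
  by_contra htB
  let q := Lagrange.nodal B id * Lagrange.nodal (A.erase t) id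
  have hq : q.natDegree ≤ k := by
    have hA_erase := Finset.card_erase_of_mem ht
    have hA_pos := Finset.card_pos.2 ⟨t, ht⟩
    rw [Polynomial.natDegree_mul Lagrange.nodal_ne_zero Lagrange.nodal_ne_zero,
      Lagrange.natDegree_nodal, Lagrange.natDegree_nodal]
    omega
  have hw_sum : ∑ x ∈ X, q.eval ⟪w, x⟫ = 0 :=
    Finset.sum_eq_zero fun x hx => (Polynomial.eval_mul ..).trans <| mul_eq_zero_of_left
      (Lagrange.eval_nodal_at_node (v := id) (Finset.mem_image_of_mem _ hx)) _
  have hz_sum : ∑ x ∈ X, q.eval ⟪z, x⟫ = (X.filter (⟪z, ·⟫ = t)).card • q.eval t := by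
    rw [Finset.sum_comp (fun s => q.eval s)]
    refine Finset.sum_eq_single_of_mem t ht fun s hs hst => ?_
    rw [Polynomial.eval_mul]
    exact smul_eq_zero_of_right _ (mul_eq_zero_of_right _
      (Lagrange.eval_nodal_at_node (v := id) (Finset.mem_erase.2 ⟨hst, hs⟩)))
  have hqt : q.eval t ≠ 0 := by
    rw [Polynomial.eval_mul]
    exact mul_ne_zero (Lagrange.eval_nodal_not_at_node fun b hb => by rintro rfl; exact htB hb)
      (Lagrange.eval_nodal_not_at_node fun a ha => (Finset.ne_of_mem_erase ha).symm)
  have hfiber : (X.filter (⟪z, ·⟫ = t)).Nonempty := by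
    obtain ⟨x, hx, hxt⟩ := Finset.mem_image.1 ht
    exact ⟨x, Finset.mem_filter.2 ⟨hx, hxt⟩⟩
  have hsums := hX.sum_eval_inner_eq hq hz hw
  rw [hz_sum, hw_sum, nsmul_eq_mul] at hsums
  exact mul_ne_zero (Nat.cast_ne_zero.2 hfiber.card_pos.ne') hqt hsums

end Design

section Dm

variable {n m : ℕ}

lemma neg_mem_Dm {X : Set (E n)} {z : E n} (hz : z ∈ Dm n m X) : -z ∈ Dm n m X := by
  obtain ⟨hz, T, hT, hzT⟩ := hz
  refine ⟨by simpa using hz, T.image Neg.neg, Finset.card_image_le.trans hT, fun x hx => ?_⟩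
  rw [inner_neg_left]
  exact Finset.mem_image_of_mem _ (hzT x hx)

lemma card_image_inner_le_of_mem_Dm {X : Finset (E n)} {z : E n} (hz : z ∈ Dm n m ↑X) :
    (X.image (⟪z, ·⟫)).card ≤ m := by
  obtain ⟨-, T, hT, hzT⟩ := hz
  exact (Finset.card_le_card (Finset.image_subset_iff.2 hzT)).trans hT

lemma IsStiff.subset_Dm_Dm {X : Finset (E n)} (hX : IsStiff n m X) :
    (↑X : Set (E n)) ⊆ Dm n m (Dm n m ↑X) := by
  obtain ⟨hdesign, w, hw⟩ := hX
  refine fun x hx => ⟨hdesign.1 hx, X.image (⟪w, ·⟫), card_image_inner_le_of_mem_Dm hw,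
    fun z hz => ?_⟩
  have hcard :=
    Nat.add_le_add (card_image_inner_le_of_mem_Dm hz) (card_image_inner_le_of_mem_Dm hw)
  rw [real_inner_comm]
  exact hdesign.image_inner_subset hz.1 hw.1 (by omega) (Finset.mem_image_of_mem _ hx)

end Dm

theorem dual_antipodal_and_sub_double_dual_general (d m : ℕ)
    (X : Finset (E (d + 1))) :
    (∀ z ∈ Dm (d + 1) m ↑X, -z ∈ Dm (d + 1) m ↑X) ∧
      (IsStiff (d + 1) m X →
        (↑X : Set (E (d + 1))) ⊆ Dm (d + 1) m (Dm (d + 1) m ↑X)) :=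
  ⟨fun _ => neg_mem_Dm, IsStiff.subset_Dm_Dm⟩

/-- Proposition 6.4 (first parts): for any configuration `ω_N ⊂ S^d` with `D_m(ω_N) ≠ ∅`, the
set `D_m(ω_N)` is antipodal; moreover if `ω_N` is `m`-stiff then `ω_N ⊆ D_m(D_m(ω_N))`. -/
theorem dual_antipodal_and_sub_double_dual (d m : ℕ) (hd : 1 ≤ d) (hm : 1 ≤ m)
    (X : Finset (E (d + 1))) (hX : (↑X : Set (E (d + 1))) ⊆ sphere (0 : E (d + 1)) 1)
    (hne : (Dm (d + 1) m ↑X).Nonempty) :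
    (∀ z ∈ Dm (d + 1) m ↑X, -z ∈ Dm (d + 1) m ↑X) ∧
      (IsStiff (d + 1) m X →
        (↑X : Set (E (d + 1))) ⊆ Dm (d + 1) m (Dm (d + 1) m ↑X)) :=
  dual_antipodal_and_sub_double_dual_general d m X
end
end
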